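/- arXiv:1606.08193 — 8 statements merged into one kernel-verified Lean document; each statement's English description precedes it below -/
import Mathlib

section
/- Let n be a positive integer, A = (a_{i,j})_{1≤i,j≤n} an n×n matrix over K, and f : {1,…,n} → {1,…,n} a map with f(n) = n. Let B be the (n−1)×(n−1) matrix with (i,j)-entry a_{i,j}·a_{f(i),n} − a_{i,n}·a_{f(i),j}. If f is not n-potent, then det B = 0. -/
open Finset Matrix

/-- From an element whose orbit avoids `Fin.last m`, extract a genuine cycle of the map `f`
lying entirely in `Fin m` (via `castSucc`). -/
lemma exists_cycle_aux {m : ℕ} (f : Fin (m + 1) → Fin (m + 1)) (i0 : Fin (m + 1))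
    (hl : ∀ k : ℕ, f^[k] i0 ≠ Fin.last m) :
    ∃ p : ℕ, 0 < p ∧ ∃ c : ℕ → Fin m,
      (∀ t, f ((c t).castSucc) = (c (t + 1)).castSucc) ∧
      (∀ t, c t = c (t % p)) ∧
      (∀ s t, s < p → t < p → c s = c t → s = t) := by
  classical
  set g : ℕ → Fin (m + 1) := fun k => f^[k] i0 with hg
  have hcollide : ∃ x y : ℕ, x ≠ y ∧ g x = g y :=
    Finite.exists_ne_map_eq_of_infinite g
  have hExists : ∃ k : ℕ, 0 < k ∧ ∃ a : ℕ, g (a + k) = g a := by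
    obtain ⟨x, y, hxy, hgxy⟩ := hcollide
    rcases lt_or_gt_of_ne hxy with h | h
    · exact ⟨y - x, by omega, x, by rw [Nat.add_sub_cancel' h.le]; exact hgxy.symm⟩
    · exact ⟨x - y, by omega, y, by rw [Nat.add_sub_cancel' h.le]; exact hgxy⟩
  obtain ⟨p, ⟨hppos, a, hpa⟩, hmin⟩ :
      ∃ p : ℕ, (0 < p ∧ ∃ a : ℕ, g (a + p) = g a) ∧
        ∀ k < p, ¬(0 < k ∧ ∃ a : ℕ, g (a + k) = g a) :=
    ⟨Nat.find hExists, Nat.find_spec hExists, fun k hk => Nat.find_min hExists hk⟩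
  refine ⟨p, hppos, ?_⟩
  have hgstep : ∀ t : ℕ, f (g (a + t % p)) = g (a + (t + 1) % p) := by
    intro t
    have h1 : f (g (a + t % p)) = g (a + t % p + 1) := by
      simp [hg, ← Function.iterate_succ_apply' f]
    rcases Nat.lt_or_ge (t % p + 1) p with h | h
    · rw [h1]
      congr 1
      have h2 : (t + 1) % p = t % p + 1 := by
        conv_lhs => rw [← Nat.mod_add_mod]
        exact Nat.mod_eq_of_lt h
      omega
    · have htp : t % p + 1 = p := by
        have := Nat.mod_lt t hppos
        omega
      have h0 : (t + 1) % p = 0 := by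
        have h2 : (t + 1) % p = (t % p + 1) % p := by
          conv_lhs => rw [← Nat.mod_add_mod]
        rw [h2, htp, Nat.mod_self]
      rw [h1, h0]
      exact (congrArg g (show a + t % p + 1 = a + p by omega)).trans
        (hpa.trans (congrArg g (Nat.add_zero a).symm))
  have hne : ∀ t : ℕ, g (a + t % p) ≠ Fin.last m := fun t => hl _
  set c : ℕ → Fin m := fun t => Fin.castPred (g (a + t % p)) (hne t) with hc
  have hcs : ∀ t, (c t).castSucc = g (a + t % p) := fun t => Fin.castSucc_castPred _ _
  refine ⟨c, ?_, ?_, ?_⟩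
  · intro t
    apply Fin.castSucc_injective
    rw [hcs, hcs, hgstep]
  · intro t
    apply Fin.castSucc_injective
    rw [hcs, hcs, Nat.mod_mod_of_dvd t dvd_rfl]
  · intro s t hs ht hst
    by_contra hne'
    have key : ∀ s t : ℕ, s < p → t < p → s < t → c s = c t → False := by
      intro s t hs ht hlt hcst
      have hgs : g (a + s) = g (a + t) := by
        have := congrArg Fin.castSucc hcst
        rwa [hcs, hcs, Nat.mod_eq_of_lt hs, Nat.mod_eq_of_lt ht] at this
      have hper : ∃ a', g (a' + (t - s)) = g a' :=
        ⟨a + s, by rw [show a + s + (t - s) = a + t by omega]; exact hgs.symm⟩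
      exact hmin (t - s) (by omega) ⟨by omega, hper⟩
    rcases Nat.lt_or_ge s t with h | h
    · exact key s t hs ht h hst
    · exact key t s ht hs (by omega) hst.symm

/-- The linear relation among the rows of `B` along a cycle of `f`. -/
lemma cycle_relation {R : Type*} [CommRing R] {m : ℕ}
    (A : Matrix (Fin (m + 1)) (Fin (m + 1)) R) (f : Fin (m + 1) → Fin (m + 1))
    (p : ℕ) (hp : 0 < p) (c : ℕ → Fin m)
    (hstep : ∀ t, f ((c t).castSucc) = (c (t + 1)).castSucc)
    (hmod : ∀ t, c t = c (t % p)) :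
    ∑ t ∈ Finset.range p,
      (∏ s ∈ ((Finset.range p).erase t).erase ((t + 1) % p),
        A ((c s).castSucc) (Fin.last m)) •
      (fun j : Fin m =>
        A ((c t).castSucc) j.castSucc * A (f ((c t).castSucc)) (Fin.last m) -
          A ((c t).castSucc) (Fin.last m) * A (f ((c t).castSucc)) j.castSucc) = 0 := by
  classical
  set q : ℕ → R := fun t => A ((c t).castSucc) (Fin.last m) with hq
  funext j
  simp only [Finset.sum_apply, Pi.smul_apply, Pi.zero_apply, smul_eq_mul]
  set X : ℕ → R := fun t => A ((c t).castSucc) j.castSucc with hX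
  have hterm : ∀ t ∈ Finset.range p,
      (∏ s ∈ ((Finset.range p).erase t).erase ((t + 1) % p), q s) *
        (X t * q ((t + 1) % p) - q t * X ((t + 1) % p)) =
      (∏ s ∈ (Finset.range p).erase t, q s) * X t -
        (∏ s ∈ (Finset.range p).erase ((t + 1) % p), q s) * X ((t + 1) % p) := by
    intro t ht
    rcases eq_or_lt_of_le (Nat.one_le_iff_ne_zero.mpr hp.ne') with hp1 | hp2
    · -- p = 1 : everything is on the single fixed point
      have hp1' : p = 1 := hp1.symm
      subst hp1'
      have ht0 : t = 0 := by simpa using ht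
      subst ht0
      simp [Nat.mod_one]
      ring
    · -- p ≥ 2
      have htlt : t < p := Finset.mem_range.mp ht
      have hne : t ≠ (t + 1) % p := by
        rcases Nat.lt_or_ge (t + 1) p with h | h
        · rw [Nat.mod_eq_of_lt h]; omega
        · have : t = p - 1 := by omega
          have : (t + 1) % p = 0 := by
            rw [show t + 1 = p by omega, Nat.mod_self]
          omega
      have hmem1 : (t + 1) % p ∈ (Finset.range p).erase t :=
        Finset.mem_erase.mpr ⟨hne.symm, Finset.mem_range.mpr (Nat.mod_lt _ hp)⟩
      have hmem2 : t ∈ (Finset.range p).erase ((t + 1) % p) :=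
        Finset.mem_erase.mpr ⟨hne, ht⟩
      have e1 : q ((t + 1) % p) * ∏ s ∈ ((Finset.range p).erase t).erase ((t + 1) % p), q s =
          ∏ s ∈ (Finset.range p).erase t, q s := Finset.mul_prod_erase _ _ hmem1
      have e2 : q t * ∏ s ∈ ((Finset.range p).erase ((t + 1) % p)).erase t, q s =
          ∏ s ∈ (Finset.range p).erase ((t + 1) % p), q s := Finset.mul_prod_erase _ _ hmem2
      rw [Finset.erase_right_comm] at e2
      rw [mul_sub, ← e1, ← e2]
      ring
  have step1 : ∀ t ∈ Finset.range p,
      (∏ s ∈ ((Finset.range p).erase t).erase ((t + 1) % p), q s) *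
        (A ((c t).castSucc) j.castSucc * A (f ((c t).castSucc)) (Fin.last m) -
          A ((c t).castSucc) (Fin.last m) * A (f ((c t).castSucc)) j.castSucc) =
      (∏ s ∈ (Finset.range p).erase t, q s) * X t -
        (∏ s ∈ (Finset.range p).erase ((t + 1) % p), q s) * X ((t + 1) % p) := by
    intro t ht
    rw [hstep t, hmod (t + 1)]
    exact hterm t ht
  rw [Finset.sum_congr rfl step1, Finset.sum_sub_distrib]
  have hreindex :
      ∑ t ∈ Finset.range p, (∏ s ∈ (Finset.range p).erase ((t + 1) % p), q s) * X ((t + 1) % p) =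
      ∑ t ∈ Finset.range p, (∏ s ∈ (Finset.range p).erase t, q s) * X t := by
    apply Finset.sum_bij' (i := fun t _ => (t + 1) % p) (j := fun t _ => (t + (p - 1)) % p)
    · intro t ht
      exact Finset.mem_range.mpr (Nat.mod_lt _ hp)
    · intro t ht
      exact Finset.mem_range.mpr (Nat.mod_lt _ hp)
    · intro t ht
      have htlt : t < p := Finset.mem_range.mp ht
      rw [Nat.mod_add_mod, show t + 1 + (p - 1) = t + p by omega,
        Nat.add_mod_right, Nat.mod_eq_of_lt htlt]
    · intro t ht
      have htlt : t < p := Finset.mem_range.mp ht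
      rw [Nat.mod_add_mod, show t + (p - 1) + 1 = t + p by omega,
        Nat.add_mod_right, Nat.mod_eq_of_lt htlt]
    · intro t ht
      rfl
  rw [hreindex, sub_self]

/-- From a nontrivial linear relation among rows (over a domain), the determinant vanishes. -/
lemma det_eq_zero_of_rel {R : Type*} [CommRing R] [IsDomain R] {m p : ℕ} (hp : 0 < p)
    (M : Matrix (Fin m) (Fin m) R) (c : ℕ → Fin m) (lam : ℕ → R)
    (hinj : ∀ s t, s < p → t < p → c s = c t → s = t)
    (hrel : ∑ t ∈ Finset.range p, lam t • M (c t) = 0)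
    (hlam : lam 0 ≠ 0) : M.det = 0 := by
  classical
  set cf : Fin m → R := fun i => ∑ t ∈ (Finset.range p).filter (fun t => c t = i), lam t with hcf
  have hsum : ∑ i : Fin m, cf i • M i = 0 := by
    rw [← hrel]
    calc ∑ i : Fin m, cf i • M i
        = ∑ i : Fin m, ∑ t ∈ (Finset.range p).filter (fun t => c t = i), lam t • M (c t) := by
          refine Finset.sum_congr rfl fun i _ => ?_
          rw [hcf, Finset.sum_smul]
          refine Finset.sum_congr rfl fun t ht => ?_
          rw [(Finset.mem_filter.mp ht).2]
      _ = ∑ t ∈ Finset.range p, lam t • M (c t) :=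
          Finset.sum_fiberwise_of_maps_to (fun t _ => Finset.mem_univ (c t)) _
  have hcf0 : cf (c 0) = lam 0 := by
    simp only [hcf]
    have : (Finset.range p).filter (fun t => c t = c 0) = {0} := by
      ext t
      simp only [Finset.mem_filter, Finset.mem_range, Finset.mem_singleton]
      constructor
      · rintro ⟨ht, hct⟩
        exact hinj t 0 ht hp hct
      · rintro rfl
        exact ⟨hp, rfl⟩
    rw [this, Finset.sum_singleton]
  have hdet := Matrix.det_updateRow_sum M (c 0) cf
  rw [hsum, hcf0, smul_eq_mul] at hdet
  have hzero : (M.updateRow (c 0) 0).det = 0 :=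
    Matrix.det_eq_zero_of_row_eq_zero (c 0) (fun j => by simp)
  rw [hzero] at hdet
  exact (mul_eq_zero.mp hdet.symm).resolve_left hlam

/-- For a positive integer `n` (written `n = m + 1`), an `n × n` matrix `A` over a
commutative ring `K`, and a map `f : {1,…,n} → {1,…,n}` with `f n = n` that is *not*
`n`-potent (i.e. it is not the case that every `i` satisfies `f^[k] i = n` for some `k`),
the `(n-1) × (n-1)` matrix with `(i,j)`-entry
`a_{i,j} a_{f(i),n} - a_{i,n} a_{f(i),j}` has determinant `0`. -/
theorem det_eq_zero_of_not_npotent {K : Type*} [CommRing K] (m : ℕ)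
    (A : Matrix (Fin (m + 1)) (Fin (m + 1)) K)
    (f : Fin (m + 1) → Fin (m + 1)) (hf : f (Fin.last m) = Fin.last m)
    (hnpot : ¬ ∀ i, ∃ k : ℕ, f^[k] i = Fin.last m) :
    Matrix.det (Matrix.of fun i j : Fin m =>
      A i.castSucc j.castSucc * A (f i.castSucc) (Fin.last m) -
        A i.castSucc (Fin.last m) * A (f i.castSucc) j.castSucc) = 0 := by
  classical
  push_neg at hnpot
  obtain ⟨i0, hl⟩ := hnpot
  obtain ⟨p, hp, c, hstep, hmod, hinj⟩ := exists_cycle_aux f i0 hl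
  -- work generically over a polynomial ring
  set G : Matrix (Fin (m + 1)) (Fin (m + 1)) (MvPolynomial (Fin (m + 1) × Fin (m + 1)) ℤ) :=
    Matrix.of fun i j => MvPolynomial.X (i, j) with hG
  set BG : Matrix (Fin m) (Fin m) (MvPolynomial (Fin (m + 1) × Fin (m + 1)) ℤ) :=
    Matrix.of fun i j : Fin m =>
    G i.castSucc j.castSucc * G (f i.castSucc) (Fin.last m) -
      G i.castSucc (Fin.last m) * G (f i.castSucc) j.castSucc with hBG
  set lam : ℕ → MvPolynomial (Fin (m + 1) × Fin (m + 1)) ℤ := fun t =>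
    ∏ s ∈ ((Finset.range p).erase t).erase ((t + 1) % p),
      G ((c s).castSucc) (Fin.last m) with hlam
  have hrel : ∑ t ∈ Finset.range p, lam t • BG (c t) = 0 := by
    exact cycle_relation G f p hp c hstep hmod
  have hlam0 : lam 0 ≠ 0 := by
    rw [hlam]
    refine Finset.prod_ne_zero_iff.mpr fun s _ => ?_
    exact MvPolynomial.X_ne_zero _
  have hBG0 : BG.det = 0 := det_eq_zero_of_rel hp BG c lam hinj hrel hlam0
  -- specialize to K
  set φ : MvPolynomial (Fin (m + 1) × Fin (m + 1)) ℤ →+* K :=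
    MvPolynomial.eval₂Hom (Int.castRingHom K) (fun v => A v.1 v.2) with hφ
  have hmap : (Matrix.of fun i j : Fin m =>
      A i.castSucc j.castSucc * A (f i.castSucc) (Fin.last m) -
        A i.castSucc (Fin.last m) * A (f i.castSucc) j.castSucc) =
      φ.mapMatrix BG := by
    ext i j
    simp [hBG, hG, hφ, Matrix.map_apply, MvPolynomial.eval₂Hom_X']
  rw [hmap, ← RingHom.map_det, hBG0, map_zero]
end

section
/- Let n ≥ 1 be an integer and W : {1,…,n} × {1,…,n} → K a function. For each i ∈ {1,…,n} set d⁺(i) = ∑_{j=1}^{n} W(i,j). Let L be the (n−1)×(n−1) matrix with (i,j)-entry δ_{i,j}·d⁺(i) − W(i,j). Then det L = ∑_{f : {1,…,n} → {1,…,n}, f(n)=n, f n-potent} ∏_{i=1}^{n−1} W(i, f(i)). -/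
/-!
Each row of the reduced Laplacian is `∑ k, W i k • (e i - e k)`, where `e (Fin.last m) = 0`, so by
multilinearity of the determinant `det L = ∑ r, (∏ i, W i (r i)) • det (L r)`, where `L r` is the
reduced Laplacian of the single map `r` with unit weights. If every vertex reaches the root under
`r`, then `L r` is block triangular for the order by distance to the root, with identity diagonal
blocks, so `det (L r) = 1`. Otherwise the indicator of the vertices that never reach the root is
a nonzero vector in the kernel of `L r`, so `det (L r) = 0`.
-/

open scoped Classical

open Matrix Finset

theorem Function.exists_iterate_eq_iff_of_ne {α : Type*} {f : α → α} {a x : α} (hx : x ≠ a) :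
    (∃ k, f^[k] x = a) ↔ ∃ k, f^[k] (f x) = a := by
  refine ⟨fun ⟨k, hk⟩ => ?_, fun ⟨k, hk⟩ => ⟨k + 1, hk⟩⟩
  obtain _ | k := k
  · exact absurd hk hx
  · exact ⟨k, hk⟩

theorem Function.find_iterate_eq_lt_of_apply_eq {α : Type*} [DecidableEq α] {f : α → α} {a : α}
    (h : ∀ x, ∃ k, f^[k] x = a) {x y : α} (hx : x ≠ a) (hxy : f x = y) :
    Nat.find (h y) < Nat.find (h x) := by
  obtain ⟨k, hk⟩ : ∃ k, Nat.find (h x) = k + 1 :=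
    Nat.exists_eq_succ_of_ne_zero fun h0 => hx (by simpa [h0] using Nat.find_spec (h x))
  have hy : f^[k] y = a := by
    have := Nat.find_spec (h x)
    rwa [hk, Function.iterate_succ_apply, hxy] at this
  exact hk ▸ Nat.lt_succ_of_le (Nat.find_le hy)

theorem Matrix.det_of_sum_smul {ι κ R : Type*} [Fintype ι] [DecidableEq ι] [Fintype κ]
    [CommRing R] (w : ι → κ → R) (v : ι → κ → ι → R) :
    det (of fun i => ∑ k, w i k • v i k) =
      ∑ r : ι → κ, (∏ i, w i (r i)) * det (of fun i => v i (r i)) := by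
  change (detRowAlternating : (ι → R) [⋀^ι]→ₗ[R] R).toMultilinearMap
    (fun i => ∑ k, w i k • v i k) = _
  rw [MultilinearMap.map_sum]
  exact Finset.sum_congr rfl fun r _ => MultilinearMap.map_smul_univ _ _ _

theorem Matrix.mul_det_eq_zero_of_mulVec_eq_zero {n R : Type*} [Fintype n] [DecidableEq n]
    [CommRing R] {A : Matrix n n R} {c : n → R} (hc : A *ᵥ c = 0) (j : n) :
    c j * A.det = 0 := by
  rw [← smul_eq_mul, ← det_updateCol_sum]
  refine det_eq_zero_of_column_eq_zero j fun i => ?_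
  have := congrFun hc i
  simp only [mulVec, dotProduct, Pi.zero_apply] at this
  simp [updateCol_self, ← this, mul_comm]

theorem Fin.sum_filter_snoc {n : ℕ} {α β : Type*} [AddCommMonoid β] [Fintype α] [DecidableEq α]
    (a : α) (P : (Fin (n + 1) → α) → Prop) [DecidablePred P] (φ : (Fin n → α) → β) :
    ∑ r ∈ univ.filter (fun r => P (Fin.snoc r a)), φ r =
      ∑ g ∈ univ.filter (fun g => g (Fin.last n) = a ∧ P g), φ (Fin.init g) := by
  refine Finset.sum_nbij' (fun r => Fin.snoc r a) Fin.init ?_ ?_ ?_ ?_ ?_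
  · intro r hr
    simpa using hr
  · intro g hg
    obtain ⟨hlast, hP⟩ := by simpa using hg
    simpa [← hlast, Fin.snoc_init_self] using hP
  · intro r _
    exact Fin.init_snoc _ _
  · intro g hg
    obtain ⟨hlast, -⟩ := by simpa using hg
    simpa [hlast] using Fin.snoc_init_self g
  · intro r _
    rw [Fin.init_snoc]

namespace MatrixTree

variable {K : Type*} [CommRing K] {m : ℕ}

def IsPotent (f : Fin (m + 1) → Fin (m + 1)) : Prop :=
  ∀ x, ∃ k, f^[k] x = Fin.last m

variable (K) in
def mapLaplacian (r : Fin m → Fin (m + 1)) : Matrix (Fin m) (Fin m) K :=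
  of fun i j => (if i = j then 1 else 0) - (if r i = j.castSucc then 1 else 0)

theorem det_mapLaplacian_of_isPotent (r : Fin m → Fin (m + 1))
    (h : IsPotent (Fin.snoc r (Fin.last m) : Fin (m + 1) → Fin (m + 1))) :
    (mapLaplacian K r).det = 1 := by
  set depth : Fin m → ℕ := fun i => Nat.find (h i.castSucc)
  have depth_lt {i j : Fin m} (hij : r i = j.castSucc) : depth j < depth i :=
    Function.find_iterate_eq_lt_of_apply_eq h (Fin.castSucc_ne_last i) (by simpa using hij)
  have hM : (mapLaplacian K r).BlockTriangular (OrderDual.toDual ∘ depth) := by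
    intro i j hji
    have hij : i ≠ j := by rintro rfl; exact lt_irrefl _ hji
    have hr : r i ≠ j.castSucc := fun hr => (depth_lt hr).not_gt hji
    simp [mapLaplacian, hij, hr]
  rw [hM.det]
  refine Finset.prod_eq_one fun d _ => ?_
  suffices (mapLaplacian K r).toSquareBlock (OrderDual.toDual ∘ depth) d = 1 by simp [this]
  ext ⟨i, hi⟩ ⟨j, hj⟩
  have hr : r i ≠ j.castSucc := fun hr =>
    (depth_lt hr).ne (OrderDual.toDual.injective (hj.trans hi.symm))
  simp [mapLaplacian, toSquareBlock_def, one_apply, hr]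

theorem det_mapLaplacian_of_not_isPotent (r : Fin m → Fin (m + 1))
    (h : ¬ IsPotent (Fin.snoc r (Fin.last m) : Fin (m + 1) → Fin (m + 1))) :
    (mapLaplacian K r).det = 0 := by
  set g : Fin (m + 1) → Fin (m + 1) := Fin.snoc r (Fin.last m)
  set c : Fin (m + 1) → K := fun x => if ∃ k, g^[k] x = Fin.last m then 0 else 1
  have c_last : c (Fin.last m) = 0 := if_pos ⟨0, rfl⟩
  have c_apply (i : Fin m) : c i.castSucc = c (r i) := by
    simp only [c, Function.exists_iterate_eq_iff_of_ne (f := g) (Fin.castSucc_ne_last i)]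
    simp [g]
  have hc : mapLaplacian K r *ᵥ (c ∘ Fin.castSucc) = 0 := by
    ext i
    have hsum :
        ∑ j : Fin m, (if r i = j.castSucc then (1 : K) else 0) * c j.castSucc = c (r i) := by
      have := Fintype.sum_ite_eq (r i) c
      rw [Fin.sum_univ_castSucc] at this
      simpa [c_last] using this
    simp only [mapLaplacian, mulVec, dotProduct, of_apply, Function.comp_apply, sub_mul,
      sum_sub_distrib, hsum]
    simp [c_apply]
  obtain ⟨x₀, hx₀⟩ : ∃ x₀, ∀ k, g^[k] x₀ ≠ Fin.last m := by
    simpa [IsPotent] using h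
  obtain ⟨i₀, rfl⟩ : ∃ i₀ : Fin m, i₀.castSucc = x₀ :=
    Fin.exists_castSucc_eq.mpr fun hlast => hx₀ 0 hlast
  simpa [c, hx₀] using mul_det_eq_zero_of_mulVec_eq_zero hc i₀

theorem det_mapLaplacian (r : Fin m → Fin (m + 1)) :
    (mapLaplacian K r).det =
      if IsPotent (Fin.snoc r (Fin.last m) : Fin (m + 1) → Fin (m + 1)) then 1 else 0 := by
  split_ifs with h
  exacts [det_mapLaplacian_of_isPotent r h, det_mapLaplacian_of_not_isPotent r h]

end MatrixTree

open MatrixTree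

/-- **Matrix-Tree theorem.** For an integer `n ≥ 1` (written `n = m + 1`) and a function
`W : {1,…,n} × {1,…,n} → K`, with `d⁺(i) = ∑_j W(i,j)`, the determinant of the
`(n-1) × (n-1)` matrix with `(i,j)`-entry `δ_{i,j} d⁺(i) - W(i,j)` equals the sum, over
all `n`-potent maps `f` (i.e. `f n = n` and every element reaches `n` under iteration of
`f`), of `∏_{i=1}^{n-1} W(i, f(i))`. -/
theorem matrix_tree_theorem {K : Type*} [CommRing K] (m : ℕ)
    (W : Fin (m + 1) → Fin (m + 1) → K) :
    Matrix.det (Matrix.of fun i j : Fin m =>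
      (if i = j then (1 : K) else 0) * (∑ k, W i.castSucc k) - W i.castSucc j.castSucc) =
    ∑ f ∈ Finset.univ.filter (fun f : Fin (m + 1) → Fin (m + 1) =>
        f (Fin.last m) = Fin.last m ∧ ∀ i, ∃ k : ℕ, f^[k] i = Fin.last m),
      ∏ i : Fin m, W i.castSucc (f i.castSucc) := by
  have rows_eq : (of fun i j : Fin m =>
      (if i = j then (1 : K) else 0) * (∑ k, W i.castSucc k) - W i.castSucc j.castSucc) =
      of fun i => ∑ k, W i.castSucc k • mapLaplacian K (fun _ => k) i := by
    ext i j
    simp [mapLaplacian, Finset.sum_apply, mul_sub, sum_sub_distrib]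
  rw [rows_eq, det_of_sum_smul]
  change ∑ r, (∏ i, W i.castSucc (r i)) * (mapLaplacian K r).det = _
  simp only [det_mapLaplacian, mul_ite, mul_one, mul_zero]
  rw [← sum_filter]
  convert Fin.sum_filter_snoc (Fin.last m) IsPotent (fun r => ∏ i, W i.castSucc (r i))
    using 3 <;> rfl
end

section
/- Let n ≥ 2 be an integer, A = (a_{i,j})_{1≤i,j≤n} and B = (b_{i,j})_{1≤i,j≤n} n×n matrices over K, and write BA = (c_{i,j})_{1≤i,j≤n}. Let G be the (n−1)×(n−1) matrix with (i,j)-entry a_{i,j}·c_{i,n} − a_{i,n}·c_{i,j}. Then det G = (∑_{f : {1,…,n} → {1,…,n}, f(n)=n, f n-potent} (weight_f B)·(abut_f A)) · det A. -/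
/-!
With `c = BA`, row `i < n` of `c_{i,n} A - a_{i,n} BA` is row `i` of `L A`, where `L` has last row
`e_n` and leading block `P = diag(c_{i,n}) - diag(a_{i,n}) B'`, `B'` being the leading
`(n-1) × (n-1)` block of `B`. The last entry of that row vanishes and the others form row `i` of
`G`, so `a_{n,n} det G = det (L A) = det P · det A`. Moving `diag(a_{i,n})` to the right of `B'`
does not change `det P` (compare the permutation expansions), and `diag(c_{i,n}) - B' diag(a_{i,n})`
is the Laplacian, reduced at the root `n`, of the complete digraph on `1, …, n` with edge weights
`w(i → j) = b_{i,j} a_{j,n}`.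

By the matrix-tree theorem its determinant is `∑_f ∏_{i<n} w(i → f i)` over the `n`-potent maps
`f`, and `∏_{i<n} b_{i,f(i)} a_{f(i),n} = a_{n,n} weight_f B abut_f A`. So the theorem holds after
multiplication by `a_{n,n}`; replacing `a_{n,n}` by the monic `X + a_{n,n}` makes this factor
cancellable, and `X = 0` gives the claim.

The matrix-tree theorem follows from multilinearity in the rows: row `i` of the Laplacian is
`∑_j w(i → j) (e_i - e_j)` with `e_n = 0`, and the matrix with rows `e_i - e_{f i}` has determinant
`1` if `f` is potent (it is triangular once the vertices are sorted by their distance to the root)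
and `0` otherwise (the rows along a cycle of `f` sum to zero).
-/

open scoped Classical

open Finset Matrix Function Polynomial

theorem Function.exists_iterate_mem_periodicPts {α : Type*} [Finite α] (f : α → α) (x : α) :
    ∃ k, f^[k] x ∈ periodicPts f := by
  obtain ⟨k, l, hne, hkl⟩ := Finite.exists_ne_map_eq_of_infinite fun k => f^[k] x
  wlog hlt : k < l generalizing k l
  · exact this l k hne.symm hkl.symm (hne.lt_or_gt.resolve_left hlt)
  refine ⟨k, mk_mem_periodicPts (Nat.sub_pos_of_lt hlt) ?_⟩
  rw [IsPeriodicPt, IsFixedPt, ← iterate_add_apply, Nat.sub_add_cancel hlt.le]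
  exact hkl.symm

theorem Fin.sum_univ_fun_eq_sum_filter_last {n : ℕ} {α M : Type*} [Fintype α] [DecidableEq α]
    [AddCommMonoid M] (a : α) (F : (Fin n → α) → M) :
    ∑ g, F g = ∑ f ∈ univ.filter fun f : Fin (n + 1) → α => f (Fin.last n) = a,
      F fun i => f i.castSucc := by
  refine sum_nbij' (fun g => Fin.snoc g a) (fun f i => f i.castSucc) (by simp) (by simp) (by simp)
    ?_ (by simp)
  rintro f hf
  obtain ⟨-, rfl⟩ := mem_filter.mp hf
  exact Fin.snoc_init_self f

namespace Matrix

variable {K : Type*} [CommRing K]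

theorem det_diagonal_sub_diagonal_mul_comm {ι : Type*} [Fintype ι] [DecidableEq ι]
    (d α : ι → K) (X : Matrix ι ι K) :
    (diagonal d - diagonal α * X).det = (diagonal d - X * diagonal α).det := by
  simp only [det_apply, sub_apply, diagonal_mul, mul_diagonal, diagonal_apply]
  refine sum_congr rfl fun σ _ => congrArg _ ?_
  -- both products are `∏ φ i * ∏ β i`, up to the substitution `i ↦ σ i` in the second factor
  let φ i := if σ i = i then d i - α i * X i i else -X (σ i) i
  let β i := if σ i = i then 1 else α i
  have hleft : ∀ i, (if σ i = i then d (σ i) else 0) - α (σ i) * X (σ i) i = φ i * β (σ i) := by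
    intro i
    by_cases h : σ i = i
    · simp [φ, β, h]
    · simp [φ, β, h, σ.injective.ne h]
      ring
  have hright : ∀ i, (if σ i = i then d (σ i) else 0) - X (σ i) i * α i = φ i * β i := by
    intro i
    by_cases h : σ i = i
    · simp [φ, β, h, mul_comm]
    · simp [φ, β, h]
  simp only [hleft, hright, prod_mul_distrib, Equiv.prod_comp σ β]

theorem det_eq_mul_det_submatrix_castSucc_of_col {n : ℕ}
    (M : Matrix (Fin (n + 1)) (Fin (n + 1)) K) (h : ∀ i : Fin n, M i.castSucc (Fin.last n) = 0) :
    M.det = M (Fin.last n) (Fin.last n) * (M.submatrix Fin.castSucc Fin.castSucc).det := by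
  rw [det_succ_column M (Fin.last n), Fin.sum_univ_castSucc]
  simp [h, Fin.succAbove_last, ← two_mul, pow_mul]

theorem det_eq_mul_det_submatrix_castSucc_of_row {n : ℕ}
    (M : Matrix (Fin (n + 1)) (Fin (n + 1)) K) (h : ∀ j : Fin n, M (Fin.last n) j.castSucc = 0) :
    M.det = M (Fin.last n) (Fin.last n) * (M.submatrix Fin.castSucc Fin.castSucc).det := by
  rw [← det_transpose, det_eq_mul_det_submatrix_castSucc_of_col Mᵀ h, ← transpose_submatrix,
    det_transpose, transpose_apply]

end Matrix

section RootedLaplacian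

variable {K : Type*} [CommRing K] {n : ℕ}

noncomputable def potentMaps (n : ℕ) : Finset (Fin (n + 1) → Fin (n + 1)) :=
  univ.filter fun f => f (Fin.last n) = Fin.last n ∧ ∀ i, ∃ k : ℕ, f^[k] i = Fin.last n

/-- The vertices are `Fin (n + 1)` with root `Fin.last n`, and `w i j` is the weight of the edge
`i → j`; loops `i → i` contribute nothing. -/
def rootedLaplacian (w : Fin n → Fin (n + 1) → K) : Matrix (Fin n) (Fin n) K :=
  diagonal (fun i => ∑ j, w i j) - of fun i k => w i k.castSucc

theorem rootedLaplacian_single_apply (g : Fin n → Fin (n + 1)) (i k : Fin n) :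
    rootedLaplacian (fun i => Pi.single (g i) (1 : K)) i k =
      (1 : Matrix (Fin n) (Fin n) K) i k - if g i = k.castSucc then 1 else 0 := by
  simp [rootedLaplacian, Pi.single_apply, one_apply, eq_comm]

theorem rootedLaplacian_row (w : Fin n → Fin (n + 1) → K) (i : Fin n) :
    rootedLaplacian w i = ∑ j, w i j • rootedLaplacian (fun _ => Pi.single j (1 : K)) i := by
  ext k
  simp [rootedLaplacian, Pi.single_apply, diagonal_apply, Finset.sum_apply, mul_sub,
    sum_sub_distrib, one_apply]

theorem det_rootedLaplacian_eq_sum_prod_mul_det (w : Fin n → Fin (n + 1) → K) :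
    (rootedLaplacian w).det =
      ∑ g : Fin n → Fin (n + 1),
        (∏ i, w i (g i)) * (rootedLaplacian fun i => Pi.single (g i) (1 : K)).det := by
  have h := (detRowAlternating (R := K) (n := Fin n)).toMultilinearMap.map_sum
    fun i j => w i j • rootedLaplacian (fun _ => Pi.single j (1 : K)) i
  simp only [AlternatingMap.coe_multilinearMap, MultilinearMap.map_smul_univ] at h
  exact (congrArg detRowAlternating (funext (rootedLaplacian_row w))).trans h

theorem exists_rank_lt_of_mem_potentMaps {f : Fin (n + 1) → Fin (n + 1)}
    (hf : f ∈ potentMaps n) : ∃ r : Fin (n + 1) → ℕ, ∀ x ≠ Fin.last n, r (f x) < r x := by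
  have hpot := (mem_filter.mp hf).2.2
  refine ⟨fun x => Nat.find (hpot x), fun x hx => ?_⟩
  have hpos : Nat.find (hpot x) ≠ 0 := fun h => hx (by simpa [h] using Nat.find_spec (hpot x))
  refine (Nat.find_min' _ ?_).trans_lt (Nat.sub_one_lt hpos)
  rw [← iterate_succ_apply, Nat.succ_eq_add_one, Nat.sub_add_cancel (Nat.pos_of_ne_zero hpos)]
  exact Nat.find_spec (hpot x)

theorem det_rootedLaplacian_single_of_mem_potentMaps {f : Fin (n + 1) → Fin (n + 1)}
    (hf : f ∈ potentMaps n) :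
    (rootedLaplacian fun i => Pi.single (f i.castSucc) (1 : K)).det = 1 := by
  obtain ⟨r, hr⟩ := exists_rank_lt_of_mem_potentMaps hf
  have hrank : ∀ i k : Fin n, f i.castSucc = k.castSucc → r k.castSucc < r i.castSucc :=
    fun i k h => h ▸ hr _ (Fin.castSucc_ne_last i)
  set M := rootedLaplacian fun i => Pi.single (f i.castSucc) (1 : K)
  set b : Fin n → ℕᵒᵈ := fun i => OrderDual.toDual (r i.castSucc)
  -- sorted by decreasing rank, `M` is triangular with identity diagonal blocks
  have hM : M.BlockTriangular b := by
    intro i k hik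
    have hne : i ≠ k := by
      rintro rfl
      exact lt_irrefl _ hik
    rw [show M i k = _ from rootedLaplacian_single_apply _ i k, one_apply_ne hne,
      if_neg fun h => (hrank i k h).not_gt hik, sub_zero]
  have hblock : ∀ a, M.toSquareBlock b a = 1 := by
    intro a
    ext ⟨i, hi⟩ ⟨k, hk⟩
    have hne : f i.castSucc ≠ k.castSucc := fun h =>
      (hrank i k h).ne (congrArg OrderDual.ofDual (hk.trans hi.symm))
    simp [M, toSquareBlock_def, rootedLaplacian_single_apply, hne, one_apply, Subtype.ext_iff]
  rw [hM.det]
  exact prod_eq_one fun a _ => by rw [hblock, det_one]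

theorem det_rootedLaplacian_single_of_not_mem_potentMaps {f : Fin (n + 1) → Fin (n + 1)}
    (hlast : f (Fin.last n) = Fin.last n) (hf : f ∉ potentMaps n) :
    (rootedLaplacian fun i => Pi.single (f i.castSucc) (1 : K)).det = 0 := by
  obtain ⟨x, hx⟩ : ∃ x, ∀ k, f^[k] x ≠ Fin.last n := by simpa [potentMaps, hlast] using hf
  obtain ⟨k, hk⟩ := exists_iterate_mem_periodicPts f x
  obtain ⟨y, hy⟩ := Fin.eq_castSucc_of_ne_last (hx k)
  set P := univ.filter (· ∈ periodicPts f)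
  let v : Fin n → K := fun i => if i.castSucc ∈ periodicPts f then 1 else 0
  -- the rows indexed by periodic points sum to zero, since `f` permutes the periodic points
  have hperm : ∀ j, ∑ x ∈ P, (if x = j then (1 : K) else 0) = ∑ x ∈ P, if f x = j then 1 else 0 :=
    fun j => .symm <| sum_nbij f
      (fun a ha => by simpa [P] using (bijOn_periodicPts f).mapsTo (mem_filter.mp ha).2)
      (by simpa [P] using (bijOn_periodicPts f).injOn)
      (by simpa [P] using (bijOn_periodicPts f).surjOn) fun _ _ => rfl
  have hv : (rootedLaplacian fun i => Pi.single (f i.castSucc) (1 : K))ᵀ *ᵥ v = 0 := by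
    ext j
    have := hperm j.castSucc
    rw [← sub_eq_zero, ← sum_sub_distrib, sum_filter, Fin.sum_univ_castSucc] at this
    simpa [mulVec, dotProduct, v, rootedLaplacian_single_apply, one_apply, hlast] using this
  rw [← det_transpose]
  exact det_eq_zero_of_mulVec_eq_zero_of_mem_nonZeroDivisors hv (i := y)
    (by simp only [v, hy, if_pos hk, one_mem])

theorem det_rootedLaplacian (w : Fin n → Fin (n + 1) → K) :
    (rootedLaplacian w).det = ∑ f ∈ potentMaps n, ∏ i, w i (f i.castSucc) := by
  have hsub : potentMaps n ⊆ univ.filter fun f => f (Fin.last n) = Fin.last n :=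
    fun f hf => mem_filter.mpr ⟨mem_univ _, (mem_filter.mp hf).2.1⟩
  rw [det_rootedLaplacian_eq_sum_prod_mul_det, Fin.sum_univ_fun_eq_sum_filter_last (Fin.last n),
    ← inter_eq_right.mpr hsub, ← sum_ite_mem]
  refine sum_congr rfl fun f hf => ?_
  split_ifs with hpot
  · rw [det_rootedLaplacian_single_of_mem_potentMaps hpot, mul_one]
  · rw [det_rootedLaplacian_single_of_not_mem_potentMaps (mem_filter.mp hf).2 hpot, mul_zero]

end RootedLaplacian

section WeightAbut

variable {K : Type*} [CommRing K] {n : ℕ}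

def pairMinorMatrix (A B : Matrix (Fin (n + 1)) (Fin (n + 1)) K) : Matrix (Fin n) (Fin n) K :=
  of fun i j => A i.castSucc j.castSucc * (B * A) i.castSucc (Fin.last n) -
    A i.castSucc (Fin.last n) * (B * A) i.castSucc j.castSucc

def weight (B : Matrix (Fin (n + 1)) (Fin (n + 1)) K) (f : Fin (n + 1) → Fin (n + 1)) : K :=
  ∏ i : Fin n, B i.castSucc (f i.castSucc)

/-- For potent `f` at least two points (the root and some preimage of it) go to the root, so the
truncated subtraction below is exact. -/
def abut (A : Matrix (Fin (n + 1)) (Fin (n + 1)) K) (f : Fin (n + 1) → Fin (n + 1)) : K :=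
  A (Fin.last n) (Fin.last n) ^ ((univ.filter fun i => f i = Fin.last n).card - 2) *
    ∏ i ∈ univ.filter (fun i : Fin n => f i.castSucc ≠ Fin.last n), A (f i.castSucc) (Fin.last n)

noncomputable def weightAbutSum (A B : Matrix (Fin (n + 1)) (Fin (n + 1)) K) : K :=
  ∑ f ∈ potentMaps n, weight B f * abut A f

theorem corner_mul_det_pairMinorMatrix_eq_det_mul_det
    (A B : Matrix (Fin (n + 1)) (Fin (n + 1)) K) :
    A (Fin.last n) (Fin.last n) * (pairMinorMatrix A B).det =
      (diagonal (fun i : Fin n => (B * A) i.castSucc (Fin.last n)) -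
        diagonal (fun i : Fin n => A i.castSucc (Fin.last n)) *
          B.submatrix Fin.castSucc Fin.castSucc).det * A.det := by
  -- `L * A` has last column `(0, …, 0, a_{n,n})` and upper left block `pairMinorMatrix A B`
  let L : Matrix (Fin (n + 1)) (Fin (n + 1)) K :=
    diagonal (Fin.snoc (α := fun _ => K) (fun i : Fin n => (B * A) i.castSucc (Fin.last n)) 1) -
      diagonal (Fin.snoc (α := fun _ => K) (fun i : Fin n => A i.castSucc (Fin.last n)) 0) * B
  have hL : L.det = (diagonal (fun i : Fin n => (B * A) i.castSucc (Fin.last n)) -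
      diagonal (fun i : Fin n => A i.castSucc (Fin.last n)) *
        B.submatrix Fin.castSucc Fin.castSucc).det := by
    rw [det_eq_mul_det_submatrix_castSucc_of_row L fun j => by
      simp [L, (Fin.castSucc_ne_last j).symm]]
    simp only [L, Matrix.sub_apply, diagonal_mul, diagonal_apply_eq, Fin.snoc_last, zero_mul,
      sub_zero, one_mul]
    congr 1
    ext i j
    simp [diagonal_apply]
  have hLA : (L * A).det = A (Fin.last n) (Fin.last n) * (pairMinorMatrix A B).det := by
    rw [det_eq_mul_det_submatrix_castSucc_of_col (L * A) fun i => by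
      simp [L, sub_mul, Matrix.mul_assoc]
      ring]
    simp only [L, sub_mul, Matrix.mul_assoc, diagonal_mul, Matrix.sub_apply, Fin.snoc_last,
      one_mul, zero_mul, sub_zero]
    congr 2
    ext i j
    simp [pairMinorMatrix, diagonal_mul]
    ring
  rw [← hLA, det_mul, hL]

theorem exists_castSucc_eq_last_of_mem_potentMaps {f : Fin (n + 2) → Fin (n + 2)}
    (hf : f ∈ potentMaps (n + 1)) : ∃ i : Fin (n + 1), f i.castSucc = Fin.last (n + 1) := by
  by_contra! h
  have hmaps : Set.MapsTo f {x | x ≠ Fin.last (n + 1)} {x | x ≠ Fin.last (n + 1)} := by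
    intro x hx
    obtain ⟨i, rfl⟩ := Fin.eq_castSucc_of_ne_last hx
    exact h i
  obtain ⟨k, hk⟩ := (mem_filter.mp hf).2.2 (0 : Fin (n + 1)).castSucc
  exact hmaps.iterate k (Fin.castSucc_ne_last 0) hk

theorem prod_mul_eq_corner_mul_weight_mul_abut (A B : Matrix (Fin (n + 2)) (Fin (n + 2)) K)
    {f : Fin (n + 2) → Fin (n + 2)} (hf : f ∈ potentMaps (n + 1)) :
    ∏ i : Fin (n + 1), B i.castSucc (f i.castSucc) * A (f i.castSucc) (Fin.last (n + 1)) =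
      A (Fin.last (n + 1)) (Fin.last (n + 1)) * (weight B f * abut A f) := by
  set k := (univ.filter fun i : Fin (n + 1) => f i.castSucc = Fin.last (n + 1)).card with hk
  obtain ⟨i, hi⟩ := exists_castSucc_eq_last_of_mem_potentMaps hf
  obtain ⟨j, hj⟩ : ∃ j, k = j + 1 :=
    Nat.exists_eq_add_one.mpr (card_pos.mpr ⟨i, mem_filter.mpr ⟨mem_univ _, hi⟩⟩)
  have hcard : (univ.filter fun i => f i = Fin.last (n + 1)).card = j + 2 := by
    rw [card_filter, Fin.sum_univ_castSucc, if_pos (mem_filter.mp hf).2.1, ← card_filter, ← hk, hj]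
  have hsplit : ∏ i : Fin (n + 1), A (f i.castSucc) (Fin.last (n + 1)) =
      A (Fin.last (n + 1)) (Fin.last (n + 1)) ^ k *
        ∏ i ∈ univ.filter (fun i : Fin (n + 1) => f i.castSucc ≠ Fin.last (n + 1)),
          A (f i.castSucc) (Fin.last (n + 1)) := by
    rw [← prod_filter_mul_prod_filter_not univ (fun i => f i.castSucc = Fin.last (n + 1)),
      prod_eq_pow_card fun i hi => by rw [(mem_filter.mp hi).2]]
  rw [prod_mul_distrib, hsplit, hj, weight, abut, hcard, Nat.add_sub_cancel]
  ring

theorem corner_mul_det_pairMinorMatrix_eq_corner_mul_weightAbutSum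
    (A B : Matrix (Fin (n + 2)) (Fin (n + 2)) K) :
    A (Fin.last (n + 1)) (Fin.last (n + 1)) * (pairMinorMatrix A B).det =
      A (Fin.last (n + 1)) (Fin.last (n + 1)) * (weightAbutSum A B * A.det) := by
  have hL : diagonal (fun i : Fin (n + 1) => (B * A) i.castSucc (Fin.last (n + 1))) -
      B.submatrix Fin.castSucc Fin.castSucc * diagonal (fun i => A i.castSucc (Fin.last (n + 1))) =
      rootedLaplacian fun i j => B i.castSucc j * A j (Fin.last (n + 1)) := by
    ext i k
    simp [rootedLaplacian, mul_apply, diagonal_apply]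
  rw [corner_mul_det_pairMinorMatrix_eq_det_mul_det, det_diagonal_sub_diagonal_mul_comm, hL,
    det_rootedLaplacian, sum_congr rfl fun f hf => prod_mul_eq_corner_mul_weight_mul_abut A B hf,
    ← mul_sum, weightAbutSum]
  ring

theorem pairMinorMatrix_map {L : Type*} [CommRing L] (φ : K →+* L)
    (A B : Matrix (Fin (n + 1)) (Fin (n + 1)) K) :
    pairMinorMatrix (A.map φ) (B.map φ) = (pairMinorMatrix A B).map φ := by
  ext i j
  simp [pairMinorMatrix, ← Matrix.map_mul]

theorem weightAbutSum_map {L : Type*} [CommRing L] (φ : K →+* L)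
    (A B : Matrix (Fin (n + 1)) (Fin (n + 1)) K) :
    weightAbutSum (A.map φ) (B.map φ) = φ (weightAbutSum A B) := by
  simp [weightAbutSum, weight, abut, map_sum, map_prod]

end WeightAbut

/-- For an integer `n ≥ 2` (written `n = m + 2`) and `n × n` matrices `A`, `B` over a
commutative ring `K`, writing `c_{i,j}` for the entries of `B * A`, the determinant of
the `(n-1) × (n-1)` matrix with `(i,j)`-entry `a_{i,j} c_{i,n} - a_{i,n} c_{i,j}` equals
`(∑_f (weight_f B) (abut_f A)) * det A`, where the sum ranges over all `n`-potent maps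
`f`, `weight_f B = ∏_{i=1}^{n-1} b_{i,f(i)}`, and
`abut_f A = a_{n,n} ^ (|f⁻¹(n)| - 2) * ∏_{i < n, f(i) ≠ n} a_{f(i),n}`. -/
theorem det_eq_sum_weight_abut_mul_det {K : Type*} [CommRing K] (m : ℕ)
    (A B : Matrix (Fin (m + 2)) (Fin (m + 2)) K) :
    Matrix.det (Matrix.of fun i j : Fin (m + 1) =>
      A i.castSucc j.castSucc * (B * A) i.castSucc (Fin.last (m + 1)) -
        A i.castSucc (Fin.last (m + 1)) * (B * A) i.castSucc j.castSucc) =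
    (∑ f ∈ Finset.univ.filter (fun f : Fin (m + 2) → Fin (m + 2) =>
        f (Fin.last (m + 1)) = Fin.last (m + 1) ∧
          ∀ i, ∃ k : ℕ, f^[k] i = Fin.last (m + 1)),
      (∏ i : Fin (m + 1), B i.castSucc (f i.castSucc)) *
        (A (Fin.last (m + 1)) (Fin.last (m + 1)) ^
            ((Finset.univ.filter fun i => f i = Fin.last (m + 1)).card - 2) *
          ∏ i ∈ Finset.univ.filter
              (fun i : Fin (m + 1) => f i.castSucc ≠ Fin.last (m + 1)),
            A (f i.castSucc) (Fin.last (m + 1)))) * A.det := by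
  show (pairMinorMatrix A B).det = weightAbutSum A B * A.det
  let A' : Matrix (Fin (m + 2)) (Fin (m + 2)) K[X] :=
    A.map C + single (Fin.last (m + 1)) (Fin.last (m + 1)) X
  have hA' : A'.map (evalRingHom 0) = A := by
    ext i j
    simp only [A', map_apply, Matrix.add_apply, coe_evalRingHom, single_apply]
    split_ifs <;> simp
  have hB : (B.map C).map (evalRingHom 0) = B := by
    ext i j
    simp
  have hmonic : (A' (Fin.last (m + 1)) (Fin.last (m + 1))).Monic := by
    simpa [A', add_comm] using monic_X_add_C (A (Fin.last (m + 1)) (Fin.last (m + 1)))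
  have h := congrArg (evalRingHom 0) <| hmonic.isRegular.left <|
    corner_mul_det_pairMinorMatrix_eq_corner_mul_weightAbutSum A' (B.map C)
  rwa [RingHom.map_det, map_mul, RingHom.map_det, RingHom.mapMatrix_apply, RingHom.mapMatrix_apply,
    ← pairMinorMatrix_map, ← weightAbutSum_map, hA', hB] at h
end

section
/- Let n be a positive integer, f : {1,…,n} → {1,…,n} a map with f(n) = n, and i ∈ {1,…,n}. Then δ_{f^{n−1}(i), n} = δ_{f^{n}(i), n} in K. -/
/-- For a positive integer `n` (written `n = m + 1`), a map `f : {1,…,n} → {1,…,n}` with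
`f n = n`, and `i ∈ {1,…,n}`: in the commutative ring `K` we have
`δ_{f^[n-1] i, n} = δ_{f^[n] i, n}`. -/
theorem delta_iterate_pred_eq_delta_iterate {K : Type*} [CommRing K] (m : ℕ)
    (f : Fin (m + 1) → Fin (m + 1)) (hf : f (Fin.last m) = Fin.last m)
    (i : Fin (m + 1)) :
    (if f^[m] i = Fin.last m then (1 : K) else 0) =
      (if f^[m + 1] i = Fin.last m then (1 : K) else 0) := by
  have key : f^[m + 1] i = Fin.last m ↔ f^[m] i = Fin.last m := by
    constructor
    · intro h
      -- pigeonhole: k ↦ f^[k] i on Fin (m+2) not injective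
      obtain ⟨a, b, hab, heq⟩ := Fintype.exists_ne_map_eq_of_card_lt
        (fun k : Fin (m + 2) => f^[(k : ℕ)] i) (by simp)
      wlog hlt : (a : ℕ) < (b : ℕ) generalizing a b
      · exact this b a hab.symm heq.symm
          (lt_of_le_of_ne (not_lt.mp hlt) (by simpa [Fin.ext_iff, eq_comm] using hab))
      set d := (b : ℕ) - (a : ℕ) with hd
      have hd1 : 1 ≤ d := by omega
      have hb : (b : ℕ) ≤ m + 1 := Nat.lt_succ_iff.mp b.isLt
      -- periodicity: f^[s + d] i = f^[s] i for s ≥ a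
      have hper : ∀ s, (a : ℕ) ≤ s → f^[s + d] i = f^[s] i := by
        intro s hs
        obtain ⟨t, rfl⟩ := Nat.exists_eq_add_of_le hs
        have hba : (a : ℕ) + t + d = (b : ℕ) + t := by omega
        rw [hba, add_comm ((b:ℕ)) t, add_comm ((a:ℕ)) t,
          Function.iterate_add_apply, Function.iterate_add_apply, ← heq]
      have hk : f^[m + 1 - d] i = Fin.last m := by
        have h1 : (a : ℕ) ≤ m + 1 - d := by omega
        have := hper (m + 1 - d) h1
        rw [Nat.sub_add_cancel (by omega), h] at this; exact this.symm
      have hkm : m + 1 - d ≤ m := by omega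
      have : f^[m - (m + 1 - d) + (m + 1 - d)] i = Fin.last m := by
        rw [Function.iterate_add_apply, hk, Function.iterate_fixed hf]
      rwa [Nat.sub_add_cancel hkm] at this
    · intro h
      rw [Function.iterate_succ_apply', h, hf]
  rw [if_congr key rfl rfl]
end

section
/- Let n be a positive integer and f : {1,…,n} → {1,…,n} an n-potent map. Let σ be a permutation of {1,…,n} with σ ≠ id. Then there exists some i ∈ {1,…,n} such that σ(i) ∉ {i, f(i)}. -/
/-- For a positive integer `n` (written `n = m + 1`) and an `n`-potent map
`f : {1,…,n} → {1,…,n}` (i.e. `f n = n` and every element reaches `n` under iteration):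
for every permutation `σ ≠ id` of `{1,…,n}`, there exists some `i` with
`σ i ∉ {i, f i}`. -/
theorem exists_not_mem_of_npotent_of_ne_one (m : ℕ) (f : Fin (m + 1) → Fin (m + 1))
    (hf : f (Fin.last m) = Fin.last m)
    (hpot : ∀ i, ∃ k : ℕ, f^[k] i = Fin.last m)
    (σ : Equiv.Perm (Fin (m + 1))) (hσ : σ ≠ 1) :
    ∃ i, σ i ∉ ({i, f i} : Set (Fin (m + 1))) := by
  by_contra h
  push_neg at h
  -- every i satisfies σ i = i or σ i = f i
  have hmem : ∀ i, σ i = i ∨ σ i = f i := by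
    intro i
    have := h i
    simpa [Set.mem_insert_iff] using this
  -- σ (last) = last
  have hlast : σ (Fin.last m) = Fin.last m := by
    rcases hmem (Fin.last m) with h1 | h1
    · exact h1
    · rw [h1, hf]
  -- there is a moved point
  obtain ⟨i₀, hi₀⟩ : ∃ i, σ i ≠ i := by
    by_contra hc
    push_neg at hc
    exact hσ (Equiv.ext fun i => hc i)
  -- the set of k such that some moved point reaches last in k steps
  have hS : ∃ k : ℕ, ∃ i, σ i ≠ i ∧ f^[k] i = Fin.last m := by
    obtain ⟨k, hk⟩ := hpot i₀
    exact ⟨k, i₀, hi₀, hk⟩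
  classical
  obtain ⟨i, hi, hik⟩ := Nat.find_spec hS
  -- σ i = f i and i ≠ f i
  have hσi : σ i = f i := (hmem i).resolve_left hi
  have hif : i ≠ f i := fun e => hi (by rw [hσi, ← e])
  -- i ≠ last
  have hine : i ≠ Fin.last m := fun e => hi (by rw [e, hlast])
  -- k₀ ≠ 0
  have hk0 : Nat.find hS ≠ 0 := by
    intro e
    rw [e] at hik
    exact hine hik
  obtain ⟨k', hk'⟩ := Nat.exists_eq_succ_of_ne_zero hk0
  rw [hk'] at hik
  -- f i is moved and reaches last in k' steps
  have hfi : σ (f i) ≠ f i := by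
    intro e
    have : σ (f i) = σ i := by rw [e, hσi]
    exact hif (σ.injective this.symm)
  have hfk : f^[k'] (f i) = Fin.last m := by
    rw [← Function.iterate_succ_apply]
    exact hik
  have hle : Nat.find hS ≤ k' := Nat.find_le ⟨f i, hfi, hfk⟩
  omega
end

section
/- Let n be a positive integer and f : {1,…,n} → {1,…,n} a map with f(n) = n. Let v_f be the column vector of length n whose i-th entry is 1 − δ_{f^{n−1}(i), n}. Then Z_f · v_f = 0 (the zero column vector). -/
private lemma key_iter {m : ℕ} (f : Fin (m+1) → Fin (m+1))
    (hf : f (Fin.last m) = Fin.last m)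
    (i : Fin (m+1)) (h : f^[m+1] i = Fin.last m) : f^[m] i = Fin.last m := by
  set A : ℕ → Finset (Fin (m+1)) :=
    fun t => Finset.univ.filter (fun j => f^[t] j = Fin.last m) with hA
  have hmemA : ∀ t j, j ∈ A t ↔ f^[t] j = Fin.last m := by
    intro t j; simp [hA]
  have hsucc : ∀ t j, j ∈ A (t+1) ↔ f j ∈ A t := by
    intro t j
    rw [hmemA, hmemA, Function.iterate_succ_apply]
  have hmono : ∀ t, A t ⊆ A (t+1) := by
    intro t j hj
    rw [hmemA] at hj ⊢
    rw [Function.iterate_succ_apply', hj, hf]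
  have hstab : ∃ t ≤ m, A t = A (t+1) := by
    by_contra hc
    push_neg at hc
    have hcard : ∀ t, t ≤ m + 1 → t + 1 ≤ (A t).card := by
      intro t
      induction t with
      | zero =>
        intro _
        have hl : Fin.last m ∈ A 0 := by rw [hmemA]; simp
        exact Finset.card_pos.mpr ⟨_, hl⟩
      | succ s ih =>
        intro hs
        have h1 := ih (by omega)
        have h2 : A s ⊂ A (s+1) :=
          Finset.ssubset_iff_subset_ne.mpr ⟨hmono s, hc s (by omega)⟩
        have := Finset.card_lt_card h2
        omega
    have h1 := hcard (m+1) le_rfl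
    have hle : (A (m+1)).card ≤ m + 1 := by
      simpa using Finset.card_le_card (Finset.subset_univ (A (m+1)))
    omega
  obtain ⟨t, ht, heq⟩ := hstab
  have hall : ∀ s, t ≤ s → A s = A t := by
    intro s hs
    induction s, hs using Nat.le_induction with
    | base => rfl
    | succ s hs ih =>
      ext j
      rw [hsucc, ih, ← hsucc, ← heq]
  have hi : i ∈ A (m+1) := by rw [hmemA]; exact h
  rw [hall (m+1) (by omega), ← hall m ht, hmemA] at hi
  exact hi

/-- For a positive integer `n` (written `n = m + 1`) and a map `f : {1,…,n} → {1,…,n}`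
with `f n = n`: the matrix `Z_f` (with `(i,j)`-entry
`δ_{i,j} - (1 - δ_{i,n}) δ_{f(i),j}`) times the column vector `v_f` (with `i`-th entry
`1 - δ_{f^[n-1] i, n}`) is the zero vector. -/
theorem Zf_mulVec_vf_eq_zero {K : Type*} [CommRing K] (m : ℕ)
    (f : Fin (m + 1) → Fin (m + 1)) (hf : f (Fin.last m) = Fin.last m) :
    Matrix.mulVec
      (Matrix.of fun i j : Fin (m + 1) =>
        (if i = j then (1 : K) else 0) -
          (1 - if i = Fin.last m then (1 : K) else 0) *
            (if f i = j then (1 : K) else 0))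
      (fun i => 1 - if f^[m] i = Fin.last m then (1 : K) else 0) = 0 := by
  funext i
  have hent : Matrix.mulVec
      (Matrix.of fun i j : Fin (m + 1) =>
        (if i = j then (1 : K) else 0) -
          (1 - if i = Fin.last m then (1 : K) else 0) *
            (if f i = j then (1 : K) else 0))
      (fun i => 1 - if f^[m] i = Fin.last m then (1 : K) else 0) i
      = (1 - if f^[m] i = Fin.last m then (1 : K) else 0) -
        (1 - if i = Fin.last m then (1 : K) else 0) *
          (1 - if f^[m] (f i) = Fin.last m then (1 : K) else 0) := by
    have hc : ∀ j, ((if i = j then (1:K) else 0) -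
          (1 - if i = Fin.last m then (1 : K) else 0) *
            (if f i = j then (1 : K) else 0)) *
          (1 - if f^[m] j = Fin.last m then (1 : K) else 0)
        = (if i = j then (1 - if f^[m] j = Fin.last m then (1:K) else 0) else 0)
          - (if f i = j then (1 - if i = Fin.last m then (1:K) else 0) *
              (1 - if f^[m] j = Fin.last m then (1:K) else 0) else 0) := by
      intro j
      split_ifs <;> ring
    simp only [Matrix.mulVec, dotProduct, Matrix.of_apply, hc,
      Finset.sum_sub_distrib, Finset.sum_ite_eq, Finset.mem_univ, if_true]
  rw [hent]
  by_cases hi : i = Fin.last m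
  · subst hi
    have h0 : f^[m] (Fin.last m) = Fin.last m := Function.iterate_fixed hf m
    simp [h0]
  · have hiff : f^[m] i = Fin.last m ↔ f^[m] (f i) = Fin.last m := by
      rw [← Function.iterate_succ_apply]
      constructor
      · intro h
        rw [Function.iterate_succ_apply', h, hf]
      · intro h
        exact key_iter f hf i h
    simp only [hi, if_false, sub_zero, one_mul, Pi.zero_apply]
    rw [show (if f^[m] i = Fin.last m then (1:K) else 0)
          = (if f^[m] (f i) = Fin.last m then (1:K) else 0) by
        simp only [hiff]]
    ring
end

section
/- Let n be a positive integer and f : {1,…,n} → {1,…,n} a map with f(n) = n. If f is n-potent, then det(Z_f) = 1. -/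
/-- For a positive integer `n` (written `n = m + 1`) and a map `f : {1,…,n} → {1,…,n}`
with `f n = n`: if `f` is `n`-potent, then `det (Z_f) = 1`, where `Z_f` is the `n × n`
matrix over `K` with `(i,j)`-entry `δ_{i,j} - (1 - δ_{i,n}) δ_{f(i),j}`. -/
theorem det_Zf_eq_one_of_npotent {K : Type*} [CommRing K] (m : ℕ)
    (f : Fin (m + 1) → Fin (m + 1)) (hf : f (Fin.last m) = Fin.last m)
    (hpot : ∀ i, ∃ k : ℕ, f^[k] i = Fin.last m) :
    Matrix.det (Matrix.of fun i j : Fin (m + 1) =>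
      (if i = j then (1 : K) else 0) -
        (1 - if i = Fin.last m then (1 : K) else 0) *
          (if f i = j then (1 : K) else 0)) = 1 := by
  classical
  set M : Matrix (Fin (m+1)) (Fin (m+1)) K := Matrix.of fun i j : Fin (m + 1) =>
      (if i = j then (1 : K) else 0) -
        (1 - if i = Fin.last m then (1 : K) else 0) *
          (if f i = j then (1 : K) else 0) with hM
  set d : Fin (m+1) → ℕ := fun i => Nat.find (hpot i) with hd
  have hspec : ∀ i, f^[d i] i = Fin.last m := fun i => Nat.find_spec (hpot i)
  have d_zero : ∀ i, d i = 0 → i = Fin.last m := by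
    intro i h
    have := hspec i
    rwa [h, Function.iterate_zero_apply] at this
  have d_last : d (Fin.last m) = 0 := by
    by_contra h
    exact h (Nat.find_eq_zero (hpot _) |>.mpr (by simp))
  have d_f : ∀ i, i ≠ Fin.last m → d (f i) < d i := by
    intro i hi
    have hdi : d i ≠ 0 := fun h => hi (d_zero i h)
    have : f^[d i - 1] (f i) = Fin.last m := by
      rw [← Function.iterate_succ_apply, Nat.succ_eq_add_one, Nat.sub_add_cancel (Nat.one_le_iff_ne_zero.mpr hdi)]
      exact hspec i
    have h1 : d (f i) ≤ d i - 1 := Nat.find_le this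
    omega
  have no_fix : ∀ i, i ≠ Fin.last m → f i ≠ i := by
    intro i hi hfi
    have : ∀ k, f^[k] i = i := by
      intro k; induction k with
      | zero => simp
      | succ k ih => rw [Function.iterate_succ_apply', ih, hfi]
    obtain ⟨k, hk⟩ := hpot i
    exact hi (by rw [← this k, hk])
  have bt : M.BlockTriangular (fun i => OrderDual.toDual (d i)) := by
    intro i j hij
    simp only [OrderDual.toDual_lt_toDual] at hij
    -- hij : d i < d j
    have hij' : i ≠ j := by rintro rfl; exact lt_irrefl _ hij
    have hil : i ≠ Fin.last m ∨ True := Or.inr trivial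
    by_cases hi : i = Fin.last m
    · subst hi
      have hj' : j ≠ Fin.last m := by
        intro h
        have : d j = 0 := h ▸ d_last
        omega
      simp [hM, hij', hf, Ne.symm hj']
    · have hfij : f i ≠ j := by
        rintro rfl
        exact absurd hij (not_lt.mpr (le_of_lt (d_f i hi)))
      simp [hM, hij', hi, hfij]
  rw [bt.det]
  apply Finset.prod_eq_one
  intro a _
  have : M.toSquareBlock (fun i => OrderDual.toDual (d i)) a = 1 := by
    ext ⟨i, hi⟩ ⟨j, hj⟩
    simp only [Matrix.toSquareBlock_def] at hi hj ⊢
    by_cases hij : i = j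
    · subst hij
      by_cases hie : i = Fin.last m
      · simp [hM, hie, Matrix.one_apply]
      · simp [hM, no_fix i hie, Matrix.one_apply, hie]
    · have hfij : f i ≠ j := by
        rintro rfl
        by_cases hie : i = Fin.last m
        · apply hij; rw [hie, hf]
        · have := d_f i hie
          rw [show d (f i) = d i from by rw [← OrderDual.toDual_inj]; rw [hi, hj]] at this
          exact lt_irrefl _ this
      simp [hM, hij, hfij, Matrix.one_apply, Subtype.ext_iff]
  rw [this, Matrix.det_one]
end

section
/- Let n be a positive integer and f : {1,…,n} → {1,…,n} a map with f(n) = n. If f is not n-potent, then det(Z_f) = 0. -/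
open scoped Matrix


/-- For a positive integer `n` (written `n = m + 1`) and a map `f : {1,…,n} → {1,…,n}`
with `f n = n`: if `f` is not `n`-potent, then `det (Z_f) = 0`, where `Z_f` is the
`n × n` matrix over `K` with `(i,j)`-entry `δ_{i,j} - (1 - δ_{i,n}) δ_{f(i),j}`. -/
theorem det_Zf_eq_zero_of_not_npotent {K : Type*} [CommRing K] (m : ℕ)
    (f : Fin (m + 1) → Fin (m + 1)) (hf : f (Fin.last m) = Fin.last m)
    (hnpot : ¬ ∀ i, ∃ k : ℕ, f^[k] i = Fin.last m) :
    Matrix.det (Matrix.of fun i j : Fin (m + 1) =>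
      (if i = j then (1 : K) else 0) -
        (1 - if i = Fin.last m then (1 : K) else 0) *
          (if f i = j then (1 : K) else 0)) = 0 := by
  classical
  push_neg at hnpot
  obtain ⟨i0, hi0⟩ := hnpot
  set A : Matrix (Fin (m + 1)) (Fin (m + 1)) K := Matrix.of fun i j : Fin (m + 1) =>
      (if i = j then (1 : K) else 0) -
        (1 - if i = Fin.last m then (1 : K) else 0) *
          (if f i = j then (1 : K) else 0) with hA
  set v : Fin (m + 1) → K := fun j => if ∀ k : ℕ, f^[k] j ≠ Fin.last m then 1 else 0 with hv
  have hvlast : v (Fin.last m) = 0 := by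
    simp only [hv]
    rw [if_neg]
    push_neg
    exact ⟨0, rfl⟩
  have hiff : ∀ i : Fin (m + 1), i ≠ Fin.last m →
      ((∀ k : ℕ, f^[k] i ≠ Fin.last m) ↔ (∀ k : ℕ, f^[k] (f i) ≠ Fin.last m)) := by
    intro i hi
    constructor
    · intro h k
      have := h (k + 1)
      rwa [Function.iterate_succ_apply] at this
    · intro h k
      cases k with
      | zero => exact hi
      | succ k =>
        rw [Function.iterate_succ_apply]
        exact h k
  have hAv : A *ᵥ v = 0 := by
    funext i
    simp only [Matrix.mulVec, dotProduct, hA, Matrix.of_apply, sub_mul,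
      Finset.sum_sub_distrib, ite_mul, one_mul, zero_mul, mul_ite, mul_one, mul_zero]
    rw [Finset.sum_ite_eq (Finset.univ) i v,
      Finset.sum_ite_eq (Finset.univ) (f i) (fun x => v x - if i = Fin.last m then v x else 0)]
    simp only [Finset.mem_univ, if_true, Pi.zero_apply]
    by_cases hi : i = Fin.last m
    · subst hi
      simp [hvlast]
    · rw [if_neg hi]
      have : v i = v (f i) := by
        simp only [hv]
        by_cases h : ∀ k : ℕ, f^[k] i ≠ Fin.last m
        · rw [if_pos h, if_pos ((hiff i hi).mp h)]
        · rw [if_neg h, if_neg (fun h' => h ((hiff i hi).mpr h'))]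
      rw [this]
      ring
  have hdet : A.det • v = 0 := by
    calc A.det • v = (A.det • (1 : Matrix (Fin (m+1)) (Fin (m+1)) K)) *ᵥ v := by
          rw [Matrix.smul_mulVec, Matrix.one_mulVec]
      _ = (A.adjugate * A) *ᵥ v := by rw [Matrix.adjugate_mul]
      _ = A.adjugate *ᵥ (A *ᵥ v) := by rw [Matrix.mulVec_mulVec]
      _ = 0 := by rw [hAv, Matrix.mulVec_zero]
  have := congrFun hdet i0
  simp only [Pi.smul_apply, Pi.zero_apply, smul_eq_mul, hv] at this
  rwa [if_pos (fun k => hi0 k), mul_one] at this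
end
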